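/- arXiv:2405.01404 — 3 statements merged into one kernel-verified Lean document; each statement's English description precedes it below -/
import Mathlib

section
/- A polar surface A (a subset of the region strictly dominating η such that each positive ray from η meets A exactly once, with projected length function ℓ_{η,λ}[A]) is a valid Pareto front surface (i.e., equal to its own truncated interpolated weak Pareto front) if and only if (C1) ℓ_{η,λ}[A] > 0 for all positive unit vectors λ, and (C2) max_{m} (ℓ_{η,λ}[A] λ^(m)) / (ℓ_{η,υ}[A] υ^(m)) ≥ 1 for all positive unit vectors λ, υ. -/
/-! Once every point of `A` strictly dominates `η`, the map `λ ↦ η + ℓ_{η,λ}[A] • λ` sends the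
positive unit sphere onto `A`, and (C1) says precisely that `η ∉ A`. For the two points of `A` in
directions `λ` and `υ`, (C2) says that some coordinate of the first is at least the corresponding
coordinate of the second, i.e. the second does not strongly dominate the first. -/

/-- The positive part of the unit sphere `S^{M-1}_+`. -/
def Splus (M : ℕ) : Set (EuclideanSpace ℝ (Fin M)) :=
  {z | (∀ m, 0 < z m) ∧ ‖z‖ = 1}

/-- `A` is a polar surface with reference `η`: it lies in the region strictly dominating
`η` (union `{η}`), and each line `{η + t • λ : t ∈ ℝ}` with `λ` a positive unit vector
meets `A` in exactly one point. -/
def IsPolarSurface {M : ℕ} (η : EuclideanSpace ℝ (Fin M))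
    (A : Set (EuclideanSpace ℝ (Fin M))) : Prop :=
  (∀ a ∈ A, (∀ m, η m < a m) ∨ a = η) ∧
  ∀ lam ∈ Splus M, ∃! y, y ∈ A ∧ ∃ t : ℝ, y = η + t • lam

/-- The projected length `ℓ_{η,λ}[A]`: the distance from `η` of the intersection of `A`
with the ray `{η + t • λ : t > 0}`. -/
noncomputable def projLen {M : ℕ} (η : EuclideanSpace ℝ (Fin M))
    (A : Set (EuclideanSpace ℝ (Fin M))) (lam : EuclideanSpace ℝ (Fin M)) : ℝ :=
  sSup {t : ℝ | 0 < t ∧ η + t • lam ∈ A}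

lemma ne_zero_of_mem_Splus {M : ℕ} {lam : EuclideanSpace ℝ (Fin M)} (hl : lam ∈ Splus M) :
    lam ≠ 0 := by
  rintro rfl
  simpa using hl.2

lemma inv_norm_smul_mem_Splus {M : ℕ} [Nonempty (Fin M)] {v : EuclideanSpace ℝ (Fin M)}
    (hv : ∀ m, 0 < v m) : ‖v‖⁻¹ • v ∈ Splus M := by
  have hne : v ≠ 0 := fun h0 => (hv (Classical.arbitrary _)).ne' (by simp [h0])
  refine ⟨fun m => ?_, norm_smul_inv_norm hne⟩
  simpa using mul_pos (inv_pos.2 (norm_pos_iff.2 hne)) (hv m)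

lemma Splus_nonempty (M : ℕ) [Nonempty (Fin M)] : (Splus M).Nonempty :=
  ⟨_, inv_norm_smul_mem_Splus (v := WithLp.toLp 2 fun _ => 1) fun _ => one_pos⟩

namespace IsPolarSurface

variable {M : ℕ} {η : EuclideanSpace ℝ (Fin M)} {A : Set (EuclideanSpace ℝ (Fin M))}
  {lam : EuclideanSpace ℝ (Fin M)}

lemma eq_of_add_smul_mem (hA : IsPolarSurface η A) (hl : lam ∈ Splus M) {s t : ℝ}
    (hs : η + s • lam ∈ A) (ht : η + t • lam ∈ A) : s = t := by
  obtain ⟨y, _, huniq⟩ := hA.2 lam hl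
  have hst : s • lam = t • lam :=
    add_left_cancel ((huniq _ ⟨hs, s, rfl⟩).trans (huniq _ ⟨ht, t, rfl⟩).symm)
  exact smul_left_injective ℝ (ne_zero_of_mem_Splus hl) hst

lemma projLen_eq (hA : IsPolarSurface η A) (hl : lam ∈ Splus M) {t : ℝ} (ht : 0 < t)
    (hmem : η + t • lam ∈ A) : projLen η A lam = t := by
  have hset : {s : ℝ | 0 < s ∧ η + s • lam ∈ A} = {t} :=
    Set.eq_singleton_iff_unique_mem.2
      ⟨⟨ht, hmem⟩, fun _ hs => hA.eq_of_add_smul_mem hl hs.2 hmem⟩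
  rw [projLen, hset, csSup_singleton]

lemma projLen_eq_zero_of_mem (hA : IsPolarSurface η A) (hη : η ∈ A) (hl : lam ∈ Splus M) :
    projLen η A lam = 0 := by
  have hset : {s : ℝ | 0 < s ∧ η + s • lam ∈ A} = ∅ :=
    Set.eq_empty_of_forall_notMem fun s ⟨hs, hsA⟩ =>
      hs.ne' (hA.eq_of_add_smul_mem hl hsA (by simpa using hη))
  rw [projLen, hset, Real.sSup_empty]

section Dominating

variable [Nonempty (Fin M)] (hA : IsPolarSurface η A) (hdom : ∀ a ∈ A, ∀ m, η m < a m)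
include hA hdom

lemma exists_pos_add_smul_mem (hl : lam ∈ Splus M) : ∃ t : ℝ, 0 < t ∧ η + t • lam ∈ A := by
  obtain ⟨y, ⟨hyA, t, rfl⟩, _⟩ := hA.2 lam hl
  have m := Classical.arbitrary (Fin M)
  have hm : η m < η m + t * lam m := by simpa using hdom _ hyA m
  exact ⟨t, pos_of_mul_pos_left (by linarith) (hl.1 m).le, hyA⟩

lemma projLen_pos (hl : lam ∈ Splus M) : 0 < projLen η A lam := by
  obtain ⟨t, ht, hmem⟩ := hA.exists_pos_add_smul_mem hdom hl
  rwa [hA.projLen_eq hl ht hmem]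

lemma add_projLen_smul_mem (hl : lam ∈ Splus M) : η + projLen η A lam • lam ∈ A := by
  obtain ⟨t, ht, hmem⟩ := hA.exists_pos_add_smul_mem hdom hl
  rwa [hA.projLen_eq hl ht hmem]

lemma image_Splus_eq : (fun lam => η + projLen η A lam • lam) '' Splus M = A := by
  refine Set.Subset.antisymm (Set.image_subset_iff.2 fun _ => hA.add_projLen_smul_mem hdom) ?_
  intro a ha
  have hpos : ∀ m, 0 < (a - η) m := fun m => by simpa using hdom a ha m
  have hn : 0 < ‖a - η‖ := norm_pos_iff.2 fun h0 =>
    (hpos (Classical.arbitrary _)).ne' (by simp [h0])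
  have hl := inv_norm_smul_mem_Splus hpos
  have ha_eq : a = η + ‖a - η‖ • ‖a - η‖⁻¹ • (a - η) := by
    rw [smul_smul, mul_inv_cancel₀ hn.ne', one_smul, add_sub_cancel]
  refine ⟨_, hl, ?_⟩
  dsimp only
  rw [hA.projLen_eq hl hn (ha_eq ▸ ha), ← ha_eq]

end Dominating

lemma forall_dominates_iff_projLen_pos [Nonempty (Fin M)] (hA : IsPolarSurface η A) :
    (∀ a ∈ A, ∀ m, η m < a m) ↔ ∀ lam ∈ Splus M, 0 < projLen η A lam := by
  refine ⟨fun hdom _ => hA.projLen_pos hdom, fun hpos a ha => ?_⟩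
  refine (hA.1 a ha).resolve_right ?_
  rintro rfl
  obtain ⟨lam, hl⟩ := Splus_nonempty M
  exact (hpos lam hl).ne' (hA.projLen_eq_zero_of_mem ha hl)

end IsPolarSurface

lemma one_le_ciSup_div_iff {ι : Type*} [Finite ι] [Nonempty ι] {f g : ι → ℝ}
    (hg : ∀ i, 0 < g i) : 1 ≤ ⨆ i, f i / g i ↔ ∃ i, g i ≤ f i := by
  obtain ⟨i, hi⟩ := exists_eq_ciSup_of_finite (f := fun i => f i / g i)
  refine ⟨fun h => ⟨i, (one_le_div (hg i)).1 (hi ▸ h)⟩, fun ⟨j, hj⟩ => ?_⟩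
  exact le_ciSup_of_le (Set.finite_range _).bddAbove j ((one_le_div (hg j)).2 hj)

/-- Pareto front conditions: a polar surface `A` is a valid Pareto front
surface (all its points strictly dominate `η` and no point of `A` strongly dominates
another) if and only if (C1) all projected lengths are positive and (C2) the maximum
ratio condition holds for all pairs of positive unit vectors. -/
theorem stmt7 (M : ℕ) (hM : 1 ≤ M) (η : EuclideanSpace ℝ (Fin M))
    (A : Set (EuclideanSpace ℝ (Fin M))) (hA : IsPolarSurface η A) :
    ((∀ a ∈ A, ∀ m, η m < a m) ∧ ∀ a ∈ A, ∀ b ∈ A, ¬ ∀ m, a m < b m) ↔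
      ((∀ lam ∈ Splus M, 0 < projLen η A lam) ∧
        ∀ lam ∈ Splus M, ∀ ups ∈ Splus M,
          1 ≤ ⨆ m, (projLen η A lam * lam m) / (projLen η A ups * ups m)) := by
  have : Nonempty (Fin M) := ⟨⟨0, hM⟩⟩
  rw [hA.forall_dominates_iff_projLen_pos]
  refine and_congr_right fun hC1 => ?_
  have hdom := hA.forall_dominates_iff_projLen_pos.2 hC1
  conv_lhs => rw [← hA.image_Splus_eq hdom]
  simp only [Set.forall_mem_image]
  refine forall₂_congr fun lam _ => forall₂_congr fun ups hu => ?_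
  rw [one_le_ciSup_div_iff fun m => mul_pos (hC1 ups hu) (hu.1 m)]
  simp only [PiLp.add_apply, PiLp.smul_apply, smul_eq_mul, add_lt_add_iff_left, not_forall,
    not_lt]
end

section
/- Strict Pareto compliancy of length-based R2 utilities: let η ∈ ℝ^M and τ : ℝ_{≥0} → ℝ be strictly increasing. Define U_{η,τ}[Y] = E_{λ ~ Uniform(S^{M−1}_+)}[max_{y∈Y} τ(s_{η,λ}(y))] for finite Y ⊂ ℝ^M. If A, B are finite subsets of the strictly dominating region of η and A strictly dominates B as sets (the weak domination region of A strictly contains that of B), then U_{η,τ}[A] > U_{η,τ}[B]. -/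
open MeasureTheory

/-- The length scalarisation function `s_{η,λ}(y) = min_m max(y^(m) - η^(m), 0) / λ^(m)`. -/
noncomputable def sLen {M : ℕ} (η lam y : EuclideanSpace ℝ (Fin M)) : ℝ :=
  ⨅ m, max (y m - η m) 0 / lam m

/-- The weak Pareto domination region `D_⪯[A]` of a set `A`. -/
def weakDom {M : ℕ} (A : Set (EuclideanSpace ℝ (Fin M))) : Set (EuclideanSpace ℝ (Fin M)) :=
  {y | ∃ a ∈ A, ∀ m, y m ≤ a m}

/-- The length-based R2 utility `U_{η,τ}[Y]`: the expectation, under the uniform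
(normalised surface) measure on `S^{M-1}_+`, of `max_{y ∈ Y} τ(s_{η,λ}(y))`. -/
noncomputable def lenUtility {M : ℕ} (η : EuclideanSpace ℝ (Fin M)) (τ : ℝ → ℝ)
    (Y : Finset (EuclideanSpace ℝ (Fin M))) (hY : Y.Nonempty) : ℝ :=
  ⨍ lam in Splus M, Y.sup' hY (fun y => τ (sLen η lam y)) ∂(μH[(M : ℝ) - 1])

/-!
Both utilities average `λ ↦ max_{y} τ (s_λ y)` over `Splus`. Since `s_λ` is monotone in `y`,
weak domination of `B` by `A` gives the pointwise inequality of the integrands. Strictness: pick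
`a ∈ A` weakly dominating a point outside `D_⪯[B]`; every `b ∈ B` then falls short of `a` in some
coordinate, so in the direction `λ₀ ∝ a - η`, where `s_{λ₀} a = ‖a - η‖` is attained in every
coordinate at once, `s_{λ₀} b < s_{λ₀} a`. By continuity the integrands differ on a relatively
open subset of `Splus` containing `λ₀`, and such a set has positive `(M-1)`-dimensional Hausdorff
measure because its projection to a coordinate hyperplane contains a ball. That measure is finite
on `Splus`, which is covered by `M` graphs of `w ↦ √(1 - ‖w‖²)` over compact balls of radius `< 1`.
-/

open Finset
open scoped ENNReal

lemma setAverage_lt_setAverage {α : Type*} [MeasurableSpace α] {μ : Measure α} {s : Set α}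
    {f g : α → ℝ} (hs : μ s ≠ ∞) (hf : IntegrableOn f s μ) (hg : IntegrableOn g s μ)
    (hle : f ≤ᵐ[μ.restrict s] g) (hlt : μ.restrict s {x | f x < g x} ≠ 0) :
    ⨍ x in s, f x ∂μ < ⨍ x in s, g x ∂μ := by
  have hint : ∫ x in s, f x ∂μ < ∫ x in s, g x ∂μ := by
    rw [← sub_pos, ← integral_sub hg hf,
      integral_pos_iff_support_of_nonneg_ae (hle.mono fun x => sub_nonneg.2) (hg.sub hf)]
    exact pos_iff_ne_zero.2 <| mt (measure_mono_null fun x hx => (sub_pos.2 hx).ne') hlt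
  have hμ : 0 < μ.real s :=
    ENNReal.toReal_pos (fun h0 => hlt (by simp [Measure.restrict_eq_zero.mpr h0])) hs
  rw [setAverage_eq, setAverage_eq, smul_eq_mul, smul_eq_mul]
  exact mul_lt_mul_of_pos_left hint (inv_pos.mpr hμ)

lemma ContDiffOn.hausdorffMeasure_image_lt_top {E F : Type*} [NormedAddCommGroup E]
    [NormedSpace ℝ E] [FiniteDimensional ℝ E] [MeasurableSpace E] [BorelSpace E]
    [NormedAddCommGroup F] [NormedSpace ℝ F] [MeasurableSpace F] [BorelSpace F]
    {f : E → F} {K : Set E} (hf : ContDiffOn ℝ 1 f K) (hK : Convex ℝ K) (hKc : IsCompact K) :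
    μH[Module.finrank ℝ E] (f '' K) < ∞ := by
  obtain ⟨C, hC⟩ := hf.exists_lipschitzOnWith one_ne_zero hK hKc
  exact (hC.hausdorffMeasure_image_le (Nat.cast_nonneg _)).trans_lt
    (ENNReal.mul_lt_top (by simp) hKc.measure_lt_top)

section sLen

variable {M : ℕ} (η : EuclideanSpace ℝ (Fin M)) {lam y : EuclideanSpace ℝ (Fin M)}

lemma sLen_le (m : Fin M) : sLen η lam y ≤ max (y m - η m) 0 / lam m :=
  ciInf_le (Set.finite_range _).bddBelow m

lemma measurable_sLen (y : EuclideanSpace ℝ (Fin M)) : Measurable fun lam => sLen η lam y :=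
  Measurable.iInf fun m => measurable_const.div (by fun_prop)

variable [NeZero M]

lemma sLen_eq_inf' (lam y : EuclideanSpace ℝ (Fin M)) :
    sLen η lam y = univ.inf' univ_nonempty fun m => max (y m - η m) 0 / lam m :=
  (inf'_univ_eq_ciInf _).symm

lemma sLen_nonneg (hlam : ∀ m, 0 ≤ lam m) : 0 ≤ sLen η lam y :=
  le_ciInf fun m => div_nonneg (le_max_right _ _) (hlam m)

lemma sLen_mono {y' : EuclideanSpace ℝ (Fin M)} (hlam : ∀ m, 0 ≤ lam m) (h : ∀ m, y m ≤ y' m) :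
    sLen η lam y ≤ sLen η lam y' :=
  le_ciInf fun m => (sLen_le η m).trans <|
    div_le_div_of_nonneg_right (max_le_max_right 0 (sub_le_sub_right (h m) _)) (hlam m)

lemma sLen_le_norm_sub (hlam : ∀ m, 0 ≤ lam m) (hnorm : ‖lam‖ = 1) :
    sLen η lam y ≤ ‖y - η‖ := by
  have hs := sLen_nonneg η (y := y) hlam
  have hcoord : ∀ m, ‖sLen η lam y * lam m‖ ≤ ‖(y - η) m‖ := by
    intro m
    rw [norm_mul, Real.norm_of_nonneg hs, Real.norm_of_nonneg (hlam m)]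
    rcases (hlam m).eq_or_lt with h | h
    · simp [← h]
    · calc sLen η lam y * lam m ≤ max (y m - η m) 0 := (le_div_iff₀ h).mp (sLen_le η m)
        _ ≤ ‖(y - η) m‖ := by
          rw [PiLp.sub_apply, Real.norm_eq_abs]; exact max_le (le_abs_self _) (abs_nonneg _)
  calc sLen η lam y = ‖sLen η lam y • lam‖ := by
        rw [norm_smul, hnorm, mul_one, Real.norm_of_nonneg hs]
    _ ≤ ‖y - η‖ := by
      rw [EuclideanSpace.norm_eq, EuclideanSpace.norm_eq]
      gcongr with m
      simpa using hcoord m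

lemma continuousOn_sLen (y : EuclideanSpace ℝ (Fin M)) :
    ContinuousOn (fun lam => sLen η lam y) {lam | ∀ m, lam m ≠ 0} := by
  simp only [sLen_eq_inf']
  exact ContinuousOn.finset_inf'_apply univ_nonempty fun m _ =>
    continuousOn_const.div (by fun_prop) fun lam hlam => hlam m

end sLen

lemma exists_forall_exists_lt_of_weakDom_ssubset {M : ℕ} {A B : Set (EuclideanSpace ℝ (Fin M))}
    (h : weakDom B ⊂ weakDom A) : ∃ a ∈ A, ∀ b ∈ B, ∃ m, b m < a m := by
  obtain ⟨x, ⟨a, ha, hxa⟩, hxB⟩ := Set.exists_of_ssubset h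
  refine ⟨a, ha, fun b hb => ?_⟩
  by_contra! hab
  exact hxB ⟨b, hb, fun m => (hxa m).trans (hab m)⟩

section Direction

variable {M : ℕ} {η a : EuclideanSpace ℝ (Fin M)} {c : ℝ}

lemma sLen_smul_sub_self [NeZero M] (hc : 0 < c) (ha : ∀ m, η m < a m) :
    sLen η (c • (a - η)) a = c⁻¹ := by
  have h : ∀ m, max (a m - η m) 0 / (c • (a - η)) m = c⁻¹ := fun m => by
    have hm : 0 < a m - η m := sub_pos.mpr (ha m)
    rw [max_eq_left hm.le, PiLp.smul_apply, PiLp.sub_apply, smul_eq_mul]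
    field_simp
  simp only [sLen, h, ciInf_const]

lemma sLen_smul_sub_lt (hc : 0 < c) (ha : ∀ m, η m < a m) {b : EuclideanSpace ℝ (Fin M)}
    {m : Fin M} (hb : b m < a m) : sLen η (c • (a - η)) b < c⁻¹ := by
  have hm : 0 < a m - η m := sub_pos.mpr (ha m)
  refine (sLen_le η m).trans_lt ?_
  rw [PiLp.smul_apply, PiLp.sub_apply, smul_eq_mul, div_lt_iff₀ (by positivity),
    inv_mul_cancel_left₀ hc.ne']
  exact max_lt (by linarith) hm

lemma exists_mem_Splus_sup'_sLen_lt [NeZero M] (ha : ∀ m, η m < a m)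
    {B : Finset (EuclideanSpace ℝ (Fin M))} (hB : B.Nonempty) (hBa : ∀ b ∈ B, ∃ m, b m < a m) :
    ∃ lam ∈ Splus M, B.sup' hB (fun b => sLen η lam b) < sLen η lam a := by
  have hd : 0 < ‖a - η‖ := norm_pos_iff.mpr fun h => by
    simpa [sub_eq_zero.mp h] using ha 0
  have hc : 0 < ‖a - η‖⁻¹ := inv_pos.mpr hd
  refine ⟨‖a - η‖⁻¹ • (a - η), ⟨fun m => ?_, ?_⟩, ?_⟩
  · simpa using mul_pos hc (sub_pos.mpr (ha m))
  · rw [norm_smul, norm_inv, norm_norm, inv_mul_cancel₀ hd.ne']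
  · rw [sLen_smul_sub_self hc ha, sup'_lt_iff]
    intro b hb
    obtain ⟨m, hm⟩ := hBa b hb
    exact sLen_smul_sub_lt hc ha hm

end Direction

section Comparison

variable {M : ℕ} [NeZero M] (η : EuclideanSpace ℝ (Fin M)) {τ : ℝ → ℝ}
  {A B : Finset (EuclideanSpace ℝ (Fin M))} (hA : A.Nonempty) (hB : B.Nonempty)
  {lam : EuclideanSpace ℝ (Fin M)}

lemma sup'_sLen_le_of_weakDom_subset (hτ : MonotoneOn τ (Set.Ici 0)) (hlam : ∀ m, 0 ≤ lam m)
    (hdom : weakDom (B : Set (EuclideanSpace ℝ (Fin M))) ⊆ weakDom A) :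
    B.sup' hB (fun y => τ (sLen η lam y)) ≤ A.sup' hA (fun y => τ (sLen η lam y)) := by
  refine sup'_le _ _ fun b hb => ?_
  obtain ⟨a, ha, hba⟩ := hdom ⟨b, hb, fun m => le_rfl⟩
  exact le_sup'_of_le _ ha <| hτ (sLen_nonneg η hlam) (sLen_nonneg η hlam)
    (sLen_mono η hlam hba)

lemma sup'_sLen_lt_of_sup'_lt (hτ : StrictMonoOn τ (Set.Ici 0)) (hlam : ∀ m, 0 ≤ lam m)
    {a : EuclideanSpace ℝ (Fin M)} (ha : a ∈ A)
    (hlt : B.sup' hB (fun b => sLen η lam b) < sLen η lam a) :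
    B.sup' hB (fun y => τ (sLen η lam y)) < A.sup' hA (fun y => τ (sLen η lam y)) := by
  refine (sup'_lt_iff _).mpr fun b hb => (lt_sup'_iff _).mpr ⟨a, ha, ?_⟩
  exact hτ (sLen_nonneg η hlam) (sLen_nonneg η hlam) ((sup'_lt_iff _).mp hlt b hb)

end Comparison

section SphereCharts

variable {N : ℕ}

noncomputable def sphereGraph (m : Fin (N + 1)) (w : EuclideanSpace ℝ (Fin N)) :
    EuclideanSpace ℝ (Fin (N + 1)) :=
  WithLp.toLp 2 (Fin.insertNth m √(1 - ‖w‖ ^ 2) fun i => w i)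

def dropCoord (m : Fin (N + 1)) (z : EuclideanSpace ℝ (Fin (N + 1))) :
    EuclideanSpace ℝ (Fin N) :=
  WithLp.toLp 2 fun i => z (m.succAbove i)

@[simp]
lemma sphereGraph_apply_self (m : Fin (N + 1)) (w : EuclideanSpace ℝ (Fin N)) :
    sphereGraph m w m = √(1 - ‖w‖ ^ 2) := by
  simp [sphereGraph]

@[simp]
lemma sphereGraph_apply_succAbove (m : Fin (N + 1)) (w : EuclideanSpace ℝ (Fin N)) (i : Fin N) :
    sphereGraph m w (m.succAbove i) = w i := by
  simp [sphereGraph]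

@[simp]
lemma dropCoord_apply (m : Fin (N + 1)) (z : EuclideanSpace ℝ (Fin (N + 1))) (i : Fin N) :
    dropCoord m z i = z (m.succAbove i) :=
  rfl

lemma dropCoord_sphereGraph (m : Fin (N + 1)) (w : EuclideanSpace ℝ (Fin N)) :
    dropCoord m (sphereGraph m w) = w := by
  ext i; simp

lemma norm_sq_eq_sq_add_norm_dropCoord_sq (m : Fin (N + 1)) (z : EuclideanSpace ℝ (Fin (N + 1))) :
    ‖z‖ ^ 2 = z m ^ 2 + ‖dropCoord m z‖ ^ 2 := by
  simp only [EuclideanSpace.real_norm_sq_eq, dropCoord_apply]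
  exact Fin.sum_univ_succAbove (fun j => z j ^ 2) m

lemma sphereGraph_dropCoord {m : Fin (N + 1)} {z : EuclideanSpace ℝ (Fin (N + 1))}
    (hz : ‖z‖ = 1) (hm : 0 ≤ z m) : sphereGraph m (dropCoord m z) = z := by
  have h := norm_sq_eq_sq_add_norm_dropCoord_sq m z
  ext j
  refine Fin.succAboveCases m ?_ (fun i => by simp) j
  rw [sphereGraph_apply_self, show 1 - ‖dropCoord m z‖ ^ 2 = z m ^ 2 by rw [hz] at h; linarith,
    Real.sqrt_sq hm]

lemma norm_sphereGraph (m : Fin (N + 1)) {w : EuclideanSpace ℝ (Fin N)} (hw : ‖w‖ ≤ 1) :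
    ‖sphereGraph m w‖ = 1 := by
  have h := norm_sq_eq_sq_add_norm_dropCoord_sq m (sphereGraph m w)
  rw [sphereGraph_apply_self, dropCoord_sphereGraph,
    Real.sq_sqrt (sub_nonneg.mpr (pow_le_one₀ (norm_nonneg w) hw)), sub_add_cancel] at h
  exact (pow_eq_one_iff_of_nonneg (norm_nonneg _) two_ne_zero).mp h

lemma lipschitzWith_dropCoord (m : Fin (N + 1)) : LipschitzWith 1 (dropCoord m) := by
  refine LipschitzWith.of_dist_le_mul fun z z' => ?_
  have h : dropCoord m z - dropCoord m z' = dropCoord m (z - z') := by ext i; simp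
  rw [NNReal.coe_one, one_mul, dist_eq_norm, dist_eq_norm, h]
  refine (sq_le_sq₀ (norm_nonneg _) (norm_nonneg _)).mp ?_
  rw [norm_sq_eq_sq_add_norm_dropCoord_sq m (z - z')]
  exact le_add_of_nonneg_left (sq_nonneg _)

lemma contDiffOn_sphereGraph (m : Fin (N + 1)) :
    ContDiffOn ℝ 1 (sphereGraph m) (Metric.ball 0 1) := by
  refine (EuclideanSpace.equiv (Fin (N + 1)) ℝ).symm.contDiff.comp_contDiffOn
    (contDiffOn_pi.mpr fun j => ?_)
  refine Fin.succAboveCases m ?_ (fun i => ?_) j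
  · simp only [Fin.insertNth_apply_same]
    refine (contDiffOn_const.sub (contDiff_norm_sq ℝ).contDiffOn).sqrt fun w hw => ?_
    rw [mem_ball_zero_iff] at hw
    nlinarith [norm_nonneg w]
  · simp only [Fin.insertNth_apply_succAbove]
    exact (EuclideanSpace.proj (𝕜 := ℝ) i).contDiff.contDiffOn

lemma continuous_sphereGraph (m : Fin (N + 1)) : Continuous (sphereGraph m) := by
  refine (PiLp.continuous_toLp 2 _).comp (continuous_pi fun j => ?_)
  refine Fin.succAboveCases m ?_ (fun i => ?_) j
  · simp only [Fin.insertNth_apply_same]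
    fun_prop
  · simp only [Fin.insertNth_apply_succAbove]
    fun_prop

end SphereCharts

lemma exists_inv_le_sq_apply {M : ℕ} [NeZero M] {z : EuclideanSpace ℝ (Fin M)} (hz : ‖z‖ = 1) :
    ∃ m, (M : ℝ)⁻¹ ≤ z m ^ 2 := by
  have hsum : ∑ _m : Fin M, (M : ℝ)⁻¹ ≤ ∑ m, z m ^ 2 := by
    rw [← EuclideanSpace.real_norm_sq_eq, hz, sum_const, card_univ, Fintype.card_fin,
      nsmul_eq_mul, mul_inv_cancel₀ (NeZero.ne (M : ℝ)), one_pow]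
  obtain ⟨m, -, hm⟩ := exists_le_of_sum_le univ_nonempty hsum
  exact ⟨m, hm⟩

lemma isOpen_setOf_forall_apply_pos {M : ℕ} :
    IsOpen {z : EuclideanSpace ℝ (Fin M) | ∀ m, 0 < z m} := by
  simp only [Set.ofPred_forall]
  exact isOpen_iInter_of_finite fun m => isOpen_lt continuous_const (by fun_prop)

lemma measurableSet_Splus {M : ℕ} : MeasurableSet (Splus M) :=
  isOpen_setOf_forall_apply_pos.measurableSet.inter
    (isClosed_eq continuous_norm continuous_const).measurableSet

section SplusMeasure

variable {N : ℕ}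

lemma Splus_subset_iUnion_image_sphereGraph :
    Splus (N + 1) ⊆ ⋃ m, sphereGraph m '' Metric.closedBall 0 √(1 - ((N + 1 : ℕ) : ℝ)⁻¹) := by
  intro z ⟨hpos, hz⟩
  obtain ⟨m, hm⟩ := exists_inv_le_sq_apply hz
  refine Set.mem_iUnion.mpr ⟨m, dropCoord m z, ?_, sphereGraph_dropCoord hz (hpos m).le⟩
  rw [mem_closedBall_zero_iff]
  refine Real.le_sqrt_of_sq_le ?_
  have h := norm_sq_eq_sq_add_norm_dropCoord_sq m z
  rw [hz] at h
  linarith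

lemma hausdorffMeasure_Splus_lt_top : μH[(N : ℝ)] (Splus (N + 1)) < ∞ := by
  have hr : √(1 - ((N + 1 : ℕ) : ℝ)⁻¹) < 1 :=
    (Real.sqrt_lt' one_pos).mpr (by rw [one_pow]; exact sub_lt_self _ (by positivity))
  refine (measure_mono Splus_subset_iUnion_image_sphereGraph).trans_lt <|
    (measure_iUnion_fintype_le _ _).trans_lt <| ENNReal.sum_lt_top.mpr fun m _ => ?_
  simpa using ((contDiffOn_sphereGraph m).mono (Metric.closedBall_subset_ball hr))
    |>.hausdorffMeasure_image_lt_top (convex_closedBall _ _) (isCompact_closedBall _ _)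

lemma hausdorffMeasure_Splus_inter_pos {V : Set (EuclideanSpace ℝ (Fin (N + 1)))}
    (hV : IsOpen V) (hne : (Splus (N + 1) ∩ V).Nonempty) :
    0 < μH[(N : ℝ)] (Splus (N + 1) ∩ V) := by
  obtain ⟨z, ⟨hpos, hz⟩, hzV⟩ := hne
  set U := sphereGraph 0 ⁻¹' ({z | ∀ m, 0 < z m} ∩ V)
  have hU : IsOpen U :=
    (isOpen_setOf_forall_apply_pos.inter hV).preimage (continuous_sphereGraph 0)
  have hzU : dropCoord 0 z ∈ U := by
    simp only [U, Set.mem_preimage, sphereGraph_dropCoord hz (hpos 0).le]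
    exact ⟨hpos, hzV⟩
  have hUsub : U ⊆ dropCoord 0 '' (Splus (N + 1) ∩ V) := by
    intro w ⟨hwpos, hwV⟩
    refine ⟨sphereGraph 0 w, ⟨⟨hwpos, norm_sphereGraph 0 ?_⟩, hwV⟩, dropCoord_sphereGraph 0 w⟩
    have h0 := hwpos 0
    rw [sphereGraph_apply_self, Real.sqrt_pos, sub_pos] at h0
    exact (pow_le_one_iff_of_nonneg (norm_nonneg w) two_ne_zero).mp h0.le
  calc 0 < μH[(N : ℝ)] U := by simpa using hU.measure_pos μH[(N : ℝ)] ⟨_, hzU⟩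
    _ ≤ μH[(N : ℝ)] (dropCoord 0 '' (Splus (N + 1) ∩ V)) := measure_mono hUsub
    _ ≤ μH[(N : ℝ)] (Splus (N + 1) ∩ V) := by
      simpa using (lipschitzWith_dropCoord 0).hausdorffMeasure_image_le (Nat.cast_nonneg N) _

end SplusMeasure

lemma isOpen_setOf_sup'_sLen_lt {M : ℕ} [NeZero M] (η : EuclideanSpace ℝ (Fin M))
    {B : Finset (EuclideanSpace ℝ (Fin M))} (hB : B.Nonempty) (a : EuclideanSpace ℝ (Fin M)) :
    IsOpen {lam | (∀ m, 0 < lam m) ∧ B.sup' hB (fun b => sLen η lam b) < sLen η lam a} := by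
  have hcont (y : EuclideanSpace ℝ (Fin M)) :
      ContinuousOn (fun lam => sLen η lam y) {lam | ∀ m, 0 < lam m} :=
    (continuousOn_sLen η y).mono fun lam hlam m => (hlam m).ne'
  exact ((ContinuousOn.finset_sup'_apply hB fun b _ => hcont b).prodMk (hcont a))
    |>.isOpen_inter_preimage isOpen_setOf_forall_apply_pos (isOpen_lt continuous_fst continuous_snd)

lemma integrableOn_Splus_sup'_sLen {N : ℕ} (η : EuclideanSpace ℝ (Fin (N + 1))) {τ : ℝ → ℝ}
    (hτ : MonotoneOn τ (Set.Ici 0)) {Y : Finset (EuclideanSpace ℝ (Fin (N + 1)))}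
    (hY : Y.Nonempty) :
    IntegrableOn (fun lam => Y.sup' hY fun y => τ (sLen η lam y)) (Splus (N + 1)) μH[(N : ℝ)] := by
  set K := Y.sup' hY fun y => ‖y - η‖
  have hτ' : Monotone fun x => τ (max x 0) := fun x x' h =>
    hτ (le_max_right x 0) (le_max_right x' 0) (max_le_max_right 0 h)
  have hmeas : Measurable fun lam => Y.sup' hY fun y => τ (max (sLen η lam y) 0) := by
    convert measurable_sup' hY (f := fun y lam => τ (max (sLen η lam y) 0))
      (fun y _ => hτ'.measurable.comp (measurable_sLen η y)) using 1
    ext lam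
    rw [Finset.sup'_apply]
  have heq : Set.EqOn (fun lam => Y.sup' hY fun y => τ (max (sLen η lam y) 0))
      (fun lam => Y.sup' hY fun y => τ (sLen η lam y)) (Splus (N + 1)) := fun lam hlam => by
    simp only [max_eq_left (sLen_nonneg η fun m => (hlam.1 m).le)]
  refine IntegrableOn.congr_fun ?_ heq measurableSet_Splus
  refine Measure.integrableOn_of_bounded (M := max |τ 0| |τ K|)
    hausdorffMeasure_Splus_lt_top.ne hmeas.aestronglyMeasurable ?_
  refine ae_restrict_of_forall_mem measurableSet_Splus fun lam hlam => ?_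
  have hlam₀ : ∀ m, 0 ≤ lam m := fun m => (hlam.1 m).le
  simp only [max_eq_left (sLen_nonneg η hlam₀), Real.norm_eq_abs]
  refine abs_le_max_abs_abs ?_ (sup'_le _ _ fun y hy => ?_)
  · obtain ⟨y, hy⟩ := hY
    exact le_sup'_of_le _ hy <| hτ Set.self_mem_Ici (sLen_nonneg η hlam₀) (sLen_nonneg η hlam₀)
  · have hyK : ‖y - η‖ ≤ K := le_sup' (fun y => ‖y - η‖) hy
    exact hτ (sLen_nonneg η hlam₀) ((norm_nonneg _).trans hyK)
      ((sLen_le_norm_sub η hlam₀ hlam.2).trans hyK)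

theorem stmt11_general (M : ℕ) (hM : 1 ≤ M) (η : EuclideanSpace ℝ (Fin M))
    (τ : ℝ → ℝ) (hτ : StrictMonoOn τ (Set.Ici (0 : ℝ)))
    (A B : Finset (EuclideanSpace ℝ (Fin M))) (hAne : A.Nonempty) (hBne : B.Nonempty)
    (hAdom : ∀ a ∈ A, ∀ m, η m < a m)
    (hdom : weakDom (B : Set (EuclideanSpace ℝ (Fin M))) ⊂
      weakDom (A : Set (EuclideanSpace ℝ (Fin M)))) :
    lenUtility η τ B hBne < lenUtility η τ A hAne := by
  obtain ⟨N, rfl⟩ : ∃ N, M = N + 1 := ⟨M - 1, by omega⟩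
  obtain ⟨a, ha, hBa⟩ := exists_forall_exists_lt_of_weakDom_ssubset hdom
  obtain ⟨lam₀, hlam₀, hlt₀⟩ := exists_mem_Splus_sup'_sLen_lt (hAdom a ha) hBne hBa
  have hcast : ((N + 1 : ℕ) : ℝ) - 1 = N := by push_cast; ring
  rw [lenUtility, lenUtility, hcast]
  refine setAverage_lt_setAverage hausdorffMeasure_Splus_lt_top.ne
    (integrableOn_Splus_sup'_sLen η hτ.monotoneOn hBne)
    (integrableOn_Splus_sup'_sLen η hτ.monotoneOn hAne) ?_ ?_
  · refine ae_restrict_of_forall_mem measurableSet_Splus fun lam hlam => ?_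
    exact sup'_sLen_le_of_weakDom_subset η hAne hBne hτ.monotoneOn (fun m => (hlam.1 m).le)
      hdom.subset
  · have hpos := hausdorffMeasure_Splus_inter_pos (isOpen_setOf_sup'_sLen_lt η hBne a)
      ⟨lam₀, hlam₀, hlam₀.1, hlt₀⟩
    refine (hpos.trans_le <|
      (measure_mono fun lam hlam => ?_).trans (Measure.le_restrict_apply _ _)).ne'
    exact ⟨sup'_sLen_lt_of_sup'_lt η hAne hBne hτ (fun m => (hlam.2.1 m).le) ha hlam.2.2, hlam.1⟩

/-- strict Pareto compliancy of length-based R2 utilities: if `τ` is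
strictly increasing on `ℝ_{≥0}` and `A`, `B` are finite subsets of the region strictly
dominating `η` with `A` strictly dominating `B` as sets (strict inclusion of weak
domination regions), then `U_{η,τ}[A] > U_{η,τ}[B]`. -/
theorem stmt11 (M : ℕ) (hM : 1 ≤ M) (η : EuclideanSpace ℝ (Fin M))
    (τ : ℝ → ℝ) (hτ : StrictMonoOn τ (Set.Ici (0 : ℝ)))
    (A B : Finset (EuclideanSpace ℝ (Fin M))) (hAne : A.Nonempty) (hBne : B.Nonempty)
    (hAdom : ∀ a ∈ A, ∀ m, η m < a m) (hBdom : ∀ b ∈ B, ∀ m, η m < b m)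
    (hdom : weakDom (B : Set (EuclideanSpace ℝ (Fin M))) ⊂
      weakDom (A : Set (EuclideanSpace ℝ (Fin M)))) :
    lenUtility η τ B hBne < lenUtility η τ A hAne :=
  stmt11_general M hM η τ hτ A B hAne hBne hAdom hdom
end

section
/- Quantile Pareto front surface is a Pareto front surface: under the same setup as the expectation case, for any α ∈ (0,1), the set {η + Q_α(ℓ_{η,λ}[Y*(ω)]) λ : λ ∈ S^{M−1}_+}, where Q_α denotes the α-level quantile of the real random variable ℓ_{η,λ}[Y*(·)], satisfies the positive-lengths and maximum-ratio conditions and is therefore a valid Pareto front surface. -/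
/-!
Both conditions pass from the random front to its quantile front because the lower quantile
`Q_α` is monotone under almost sure inequalities and positively homogeneous. The maximum-ratio
condition for `ℓ_λ, ℓ_υ > 0` says exactly `ℓ_υ ≤ c ℓ_λ` with `c = maxₘ λₘ / υₘ`, which therefore
gives `Q_α(ℓ_υ) ≤ Q_α(c ℓ_λ) = c Q_α(ℓ_λ)`. Positivity of `Q_α(ℓ_λ)` comes from the right
continuity of the distribution function of `ℓ_λ`, which vanishes at `0`.
-/

open MeasureTheory
open scoped Pointwise

/-- The `α`-level (lower) quantile of a real random variable `X` under `P`. -/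
noncomputable def qtl {Ω : Type*} [MeasurableSpace Ω] (P : Measure Ω) (X : Ω → ℝ)
    (α : ℝ) : ℝ :=
  sInf {x : ℝ | α ≤ (P {ω | X ω ≤ x}).toReal}

theorem lt_csInf_setOf_le_of_continuousWithinAt {F : ℝ → ℝ} (hF : Monotone F) {a α : ℝ}
    (hcont : ContinuousWithinAt F (Set.Ici a) a) (ha : F a < α)
    (hne : {x | α ≤ F x}.Nonempty) : a < sInf {x | α ≤ F x} := by
  obtain ⟨b, hFb, hab⟩ : ∃ b, F b < α ∧ a < b :=
    (((hcont.eventually (gt_mem_nhds ha)).filter_mono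
      (nhdsWithin_mono a Set.Ioi_subset_Ici_self)).and self_mem_nhdsWithin).exists
  refine hab.trans_le (le_csInf hne fun x hx => ?_)
  by_contra! hxb
  exact (hx.trans (hF hxb.le)).not_gt hFb

theorem one_le_iSup_mul_div_mul_iff {ι : Sort*} {a b : ℝ} (ha : 0 ≤ a) (hb : 0 < b)
    (u v : ι → ℝ) : 1 ≤ ⨆ i, a * u i / (b * v i) ↔ b ≤ a * ⨆ i, u i / v i := by
  simp_rw [mul_div_mul_comm a, ← Real.mul_iSup_of_nonneg (div_nonneg ha hb.le),
    div_mul_eq_mul_div, one_le_div hb]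

section Quantile

variable {Ω : Type*} [MeasurableSpace Ω] {P : Measure Ω} {X Y : Ω → ℝ} {α : ℝ}

def qtlSet (P : Measure Ω) (X : Ω → ℝ) (α : ℝ) : Set ℝ :=
  {x | α ≤ (P {ω | X ω ≤ x}).toReal}

theorem qtl_eq_sInf_qtlSet : qtl P X α = sInf (qtlSet P X α) := rfl

theorem mem_qtlSet_of_ae_le [IsProbabilityMeasure P] (hα : α ≤ 1) {C : ℝ}
    (hC : ∀ᵐ ω ∂P, X ω ≤ C) : C ∈ qtlSet P X α := by
  have h : P {ω | X ω ≤ C} = 1 := by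
    rw [measure_congr (ae_eq_univ.mpr hC : {ω | X ω ≤ C} =ᵐ[P] Set.univ), measure_univ]
  simpa [qtlSet, h] using hα

theorem measure_setOf_le_eq_zero_of_ae_lt {a : ℝ} (ha : ∀ᵐ ω ∂P, a < X ω) :
    P {ω | X ω ≤ a} = 0 :=
  measure_mono_null (fun _ hω => hω.not_gt) (ae_iff.mp ha)

theorem mem_lowerBounds_qtlSet_of_ae_lt (hα : 0 < α) {a : ℝ} (ha : ∀ᵐ ω ∂P, a < X ω) :
    a ∈ lowerBounds (qtlSet P X α) := by
  intro x hx
  by_contra! hxa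
  have hnull : P {ω | X ω ≤ x} = 0 := measure_mono_null (fun _ hω => le_trans hω hxa.le)
    (measure_setOf_le_eq_zero_of_ae_lt ha)
  simp only [qtlSet, Set.mem_ofPred_eq, hnull, ENNReal.toReal_zero] at hx
  exact hx.not_gt hα

theorem qtl_mono_of_ae_le [IsFiniteMeasure P] (hXY : ∀ᵐ ω ∂P, X ω ≤ Y ω)
    (hX : BddBelow (qtlSet P X α)) (hY : (qtlSet P Y α).Nonempty) :
    qtl P X α ≤ qtl P Y α := by
  refine csInf_le_csInf hX hY fun x (hx : α ≤ _) => (hx.trans ?_ : α ≤ _)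
  refine ENNReal.toReal_mono (measure_ne_top _ _) (measure_mono_ae ?_)
  filter_upwards [hXY] with ω hω using fun hYx => hω.trans hYx

theorem qtlSet_const_mul {c : ℝ} (hc : 0 < c) :
    qtlSet P (fun ω => c * X ω) α = c • qtlSet P X α := by
  ext x
  simp only [Set.mem_smul_set_iff_inv_smul_mem₀ hc.ne', qtlSet, Set.mem_ofPred_eq,
    smul_eq_mul, le_inv_mul_iff₀ hc]

theorem qtl_const_mul {c : ℝ} (hc : 0 < c) :
    qtl P (fun ω => c * X ω) α = c * qtl P X α := by
  rw [qtl_eq_sInf_qtlSet, qtlSet_const_mul hc, Real.sInf_smul_of_nonneg hc.le]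
  rfl

theorem qtlSet_eq_setOf_cdf [IsProbabilityMeasure P] (hX : Measurable X) :
    qtlSet P X α = {x | α ≤ ProbabilityTheory.cdf (P.map X) x} := by
  ext x
  have := Measure.isProbabilityMeasure_map (μ := P) hX.aemeasurable
  rw [Set.mem_ofPred_eq, ProbabilityTheory.cdf_eq_real, measureReal_def,
    Measure.map_apply hX measurableSet_Iic]
  rfl

theorem qtl_pos [IsProbabilityMeasure P] (hα : α ∈ Set.Ioc 0 1) (hX : Measurable X)
    (hpos : ∀ᵐ ω ∂P, 0 < X ω) {C : ℝ} (hC : ∀ᵐ ω ∂P, X ω ≤ C) : 0 < qtl P X α := by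
  have hne : (qtlSet P X α).Nonempty := ⟨C, mem_qtlSet_of_ae_le hα.2 hC⟩
  have hcdf0 : ProbabilityTheory.cdf (P.map X) 0 = 0 := by
    have := Measure.isProbabilityMeasure_map (μ := P) hX.aemeasurable
    rw [ProbabilityTheory.cdf_eq_real, measureReal_def, Measure.map_apply hX measurableSet_Iic]
    change (P {ω | X ω ≤ 0}).toReal = 0
    rw [measure_setOf_le_eq_zero_of_ae_lt hpos, ENNReal.toReal_zero]
  rw [qtlSet_eq_setOf_cdf hX] at hne
  rw [qtl_eq_sInf_qtlSet, qtlSet_eq_setOf_cdf hX]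
  exact lt_csInf_setOf_le_of_continuousWithinAt (ProbabilityTheory.monotone_cdf _)
    ((ProbabilityTheory.cdf _).right_continuous 0) (hcdf0.trans_lt hα.1) hne

end Quantile

theorem iSup_div_pos_of_mem_Splus {M : ℕ} {lam ups : EuclideanSpace ℝ (Fin M)}
    (hlam : lam ∈ Splus M) (hups : ups ∈ Splus M) : 0 < ⨆ m, lam m / ups m := by
  obtain ⟨m⟩ : Nonempty (Fin M) := by
    by_contra! hM
    have hzero : lam = 0 := Subsingleton.elim _ _
    simpa [hzero] using hlam.2
  exact (div_pos (hlam.1 m) (hups.1 m)).trans_le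
    (le_ciSup (f := fun m => lam m / ups m) (Set.finite_range _).bddAbove m)

theorem stmt14_general (M : ℕ) (η : EuclideanSpace ℝ (Fin M))
    (α : ℝ) (hα : α ∈ Set.Ioo (0 : ℝ) 1)
    {Ω : Type*} [MeasurableSpace Ω] (P : Measure Ω) [IsProbabilityMeasure P]
    (Y : Ω → Set (EuclideanSpace ℝ (Fin M)))
    (hmeas : ∀ lam ∈ Splus M, Measurable fun ω => projLen η (Y ω) lam)
    (hpos : ∀ lam ∈ Splus M, ∀ᵐ ω ∂P, 0 < projLen η (Y ω) lam)
    (hbdd : ∃ C : ℝ, ∀ᵐ ω ∂P, ∀ lam ∈ Splus M, projLen η (Y ω) lam ≤ C)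
    (hratio : ∀ lam ∈ Splus M, ∀ ups ∈ Splus M, ∀ᵐ ω ∂P,
      1 ≤ ⨆ m, (projLen η (Y ω) lam * lam m) / (projLen η (Y ω) ups * ups m)) :
    (∀ lam ∈ Splus M, 0 < qtl P (fun ω => projLen η (Y ω) lam) α) ∧
      ∀ lam ∈ Splus M, ∀ ups ∈ Splus M,
        1 ≤ ⨆ m, (qtl P (fun ω => projLen η (Y ω) lam) α * lam m) /
            (qtl P (fun ω => projLen η (Y ω) ups) α * ups m) := by
  obtain ⟨C, hC⟩ := hbdd
  have hle (lam) (hlam : lam ∈ Splus M) : ∀ᵐ ω ∂P, projLen η (Y ω) lam ≤ C :=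
    hC.mono fun _ h => h lam hlam
  have hQpos (lam) (hlam : lam ∈ Splus M) : 0 < qtl P (fun ω => projLen η (Y ω) lam) α :=
    qtl_pos (Set.Ioo_subset_Ioc_self hα) (hmeas lam hlam) (hpos lam hlam) (hle lam hlam)
  refine ⟨hQpos, fun lam hlam ups hups => ?_⟩
  set c := ⨆ m, lam m / ups m
  have hc : 0 < c := iSup_div_pos_of_mem_Splus hlam hups
  have hdom : ∀ᵐ ω ∂P, projLen η (Y ω) ups ≤ c * projLen η (Y ω) lam := by
    filter_upwards [hratio lam hlam ups hups, hpos lam hlam, hpos ups hups] with ω h hl hu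
    rwa [one_le_iSup_mul_div_mul_iff hl.le hu, mul_comm] at h
  have hcle : ∀ᵐ ω ∂P, c * projLen η (Y ω) lam ≤ c * C := by
    filter_upwards [hle lam hlam] with ω h using mul_le_mul_of_nonneg_left h hc.le
  rw [one_le_iSup_mul_div_mul_iff (hQpos lam hlam).le (hQpos ups hups), mul_comm,
    ← qtl_const_mul hc]
  exact qtl_mono_of_ae_le hdom ⟨0, mem_lowerBounds_qtlSet_of_ae_lt hα.1 (hpos ups hups)⟩
    ⟨c * C, mem_qtlSet_of_ae_le hα.2.le hcle⟩

/-- quantile Pareto front surface: under the same setup as the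
expectation case, for any `α ∈ (0,1)` the quantile projected lengths
`λ ↦ Q_α(ℓ_{η,λ}[Y*(·)])` satisfy the positive-lengths and maximum-ratio conditions,
so `{η + Q_α(ℓ_{η,λ}[Y*]) • λ : λ ∈ S^{M-1}_+}` is a valid Pareto front surface. -/
theorem stmt14 (M : ℕ) (hM : 1 ≤ M) (η : EuclideanSpace ℝ (Fin M))
    (α : ℝ) (hα : α ∈ Set.Ioo (0 : ℝ) 1)
    {Ω : Type*} [MeasurableSpace Ω] (P : Measure Ω) [IsProbabilityMeasure P]
    (Y : Ω → Set (EuclideanSpace ℝ (Fin M)))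
    (hmeas : ∀ lam ∈ Splus M, Measurable fun ω => projLen η (Y ω) lam)
    (hray : ∀ᵐ ω ∂P, ∀ lam ∈ Splus M, ∃! t : ℝ, 0 < t ∧ η + t • lam ∈ Y ω)
    (hpos : ∀ lam ∈ Splus M, ∀ᵐ ω ∂P, 0 < projLen η (Y ω) lam)
    (hbdd : ∃ C : ℝ, ∀ᵐ ω ∂P, ∀ lam ∈ Splus M, projLen η (Y ω) lam ≤ C)
    (hratio : ∀ lam ∈ Splus M, ∀ ups ∈ Splus M, ∀ᵐ ω ∂P,
      1 ≤ ⨆ m, (projLen η (Y ω) lam * lam m) / (projLen η (Y ω) ups * ups m)) :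
    (∀ lam ∈ Splus M, 0 < qtl P (fun ω => projLen η (Y ω) lam) α) ∧
      ∀ lam ∈ Splus M, ∀ ups ∈ Splus M,
        1 ≤ ⨆ m, (qtl P (fun ω => projLen η (Y ω) lam) α * lam m) /
            (qtl P (fun ω => projLen η (Y ω) ups) α * ups m) :=
  stmt14_general M η α hα P Y hmeas hpos hbdd hratio
end
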